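/- The dcpo L is an ω-algebraic domain: every element of L is the directed supremum of the compact elements below it, and K(L) is countable. -/

import Mathlib

/-- Nonempty finite sequences of positive naturals. -/
abbrev FinSeq := {l : List ℕ+ // l ≠ []}

/-- `Sig` : nonempty finite or countably infinite sequences of positive naturals. -/
abbrev Sig := FinSeq ⊕ (ℕ → ℕ+)

/-- The substring (prefix) order on `Sig`. -/
def sigLE : Sig → Sig → Prop
  | Sum.inl a, Sum.inl b => a.val <+: b.val
  | Sum.inl a, Sum.inr f => ∀ i : Fin a.val.length, a.val.get i = f i.val
  | Sum.inr f, Sum.inr g => f = g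
  | Sum.inr _, Sum.inl _ => False

/-- A subset `D` is directed w.r.t. relation `r`. -/
def DirectedSet {A : Type _} (r : A → A → Prop) (D : Set A) : Prop :=
  D.Nonempty ∧ ∀ a ∈ D, ∀ b ∈ D, ∃ c ∈ D, r a c ∧ r b c

/-- `s` is the supremum (least upper bound) of `D` w.r.t. `r`. -/
def IsSupOf {A : Type _} (r : A → A → Prop) (D : Set A) (s : A) : Prop :=
  (∀ a ∈ D, r a s) ∧ ∀ u, (∀ a ∈ D, r a u) → r s u

/-- `c` is a compact element w.r.t. `r`. -/
def IsCompactEl {A : Type _} (r : A → A → Prop) (c : A) : Prop :=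
  ∀ D s, DirectedSet r D → IsSupOf r D s → r c s → ∃ d ∈ D, r c d

/-- `x` is maximal w.r.t. `r`. -/
def IsMaximalEl {A : Type _} (r : A → A → Prop) (x : A) : Prop :=
  ∀ y, r x y → y = x

/-- `U` is Scott open w.r.t. `r`. -/
def ScottOpen {A : Type _} (r : A → A → Prop) (U : Set A) : Prop :=
  (∀ x ∈ U, ∀ y, r x y → y ∈ U) ∧
  ∀ D s, DirectedSet r D → IsSupOf r D s → s ∈ U → ∃ d ∈ D, d ∈ U

/-- The poset `X`: pairs `x_{m,n}` with `m ∈ ℕ₊`, `n ∈ ℕ₊ ∪ {ω}` (`ω = ⊤`). -/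
abbrev XP := ℕ+ × WithTop ℕ+

/-- Order on `X`: `x_{m₁,n₁} ≤ x_{m₂,n₂}` iff `m₁ = m₂` and `n₁ ≤ n₂`. -/
def xLE : XP → XP → Prop := fun a b => a.1 = b.1 ∧ a.2 ≤ b.2

/-- The carrier of `L = X ∪ Σ ∪ Σ*`. -/
abbrev LP := XP ⊕ (Sig ⊕ Sig)

def toX (p : XP) : LP := Sum.inl p
/-- The copy `Σ` inside `L`. -/
def toS (a : Sig) : LP := Sum.inr (Sum.inl a)
/-- The copy `Σ*` inside `L`. -/
def toS' (a : Sig) : LP := Sum.inr (Sum.inr a)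

/-- Underlying sequence of an element of `Σ ∪ Σ*`. -/
def sigOf : Sig ⊕ Sig → Sig := Sum.elim id id

/-- `entryGE v k m` : the length of `v` is `≥ k+1` and its `(k+1)`-th entry is `≥ m`
(0-based index `k`). -/
def entryGE : Sig → ℕ → ℕ+ → Prop
  | Sum.inl l, k, m => ∃ h : k < l.val.length, m ≤ l.val.get ⟨k, h⟩
  | Sum.inr f, k, m => m ≤ f k

/-- The order on `L`. -/
def lLE : LP → LP → Prop
  | Sum.inl x, Sum.inl y => xLE x y
  | Sum.inl x, Sum.inr w =>
      ∃ m : ℕ+, x.2 = (m : WithTop ℕ+) ∧ entryGE (sigOf w) x.1.natPred m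
  | Sum.inr (Sum.inl a), Sum.inr w => sigLE a (sigOf w)
  | Sum.inr (Sum.inr a), Sum.inr (Sum.inr b) => sigLE a b
  | Sum.inr (Sum.inr _), Sum.inr (Sum.inl _) => False
  | Sum.inr _, Sum.inl _ => False


/-!
The elements `x_{k,m}` with `m` finite and the finite sequences in `Σ` and `Σ*` are compact,
and every other element is the supremum of a chain of them: `x_{k,ω}` of `(x_{k,m})_m`, an
infinite sequence of its finite prefixes. Since `K(L)` is then essentially `ℕ₊ × ℕ₊` plus two
copies of the finite lists, it is countable.

A directed set inside `X` lives in one chain `{x_{k,n}}` and has its supremum there (its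
largest element, or `x_{k,ω}`). A directed set meeting `Σ ∪ Σ*` has the prefix-supremum `t` of
its sequences as supremum, taken in `Σ*` when the set meets `Σ*` and in `Σ` otherwise. A
finite sequence below such a supremum lies below a member of the set because the lengths of the
members approach the length of `t`; and `x_{k,m}` below a sequence already lies below its
(compact) prefix of length `k`.
-/

section Order

variable {α : Type*} {r : α → α → Prop}

theorem isSupOf_of_greatest {D : Set α} {a : α} (ha : a ∈ D) (h : ∀ d ∈ D, r d a) :
    IsSupOf r D a :=
  ⟨h, fun _ hu => hu a ha⟩

theorem directedSet_singleton {a : α} (h : r a a) : DirectedSet r {a} :=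
  ⟨Set.singleton_nonempty a, by rintro _ rfl _ rfl; exact ⟨_, rfl, h, h⟩⟩

theorem directedSet_range {ι : Type*} [SemilatticeSup ι] [Nonempty ι] {g : ι → α}
    (hg : ∀ i j, i ≤ j → r (g i) (g j)) : DirectedSet r (Set.range g) :=
  ⟨Set.range_nonempty g, by
    rintro _ ⟨i, rfl⟩ _ ⟨j, rfl⟩
    exact ⟨g (i ⊔ j), ⟨i ⊔ j, rfl⟩, hg _ _ le_sup_left, hg _ _ le_sup_right⟩⟩

theorem not_isCompactEl_of_isSupOf {D : Set α} {s : α} (hD : DirectedSet r D)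
    (hs : IsSupOf r D s) (hss : r s s) (h : ∀ d ∈ D, ¬ r s d) : ¬ IsCompactEl r s := fun hc =>
  let ⟨d, hd, hsd⟩ := hc D s hD hs hss
  h d hd hsd

theorem directedSet_and_isSupOf_compactsBelow (htrans : ∀ a b c, r a b → r b c → r a c)
    {A : Set α} {x : α} (hA : DirectedSet r A) (hx : IsSupOf r A x)
    (hAc : ∀ a ∈ A, IsCompactEl r a) :
    DirectedSet r {c | IsCompactEl r c ∧ r c x} ∧ IsSupOf r {c | IsCompactEl r c ∧ r c x} x := by
  have hAK : ∀ a ∈ A, a ∈ {c | IsCompactEl r c ∧ r c x} := fun a ha => ⟨hAc a ha, hx.1 a ha⟩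
  have hcof : ∀ c ∈ {c | IsCompactEl r c ∧ r c x}, ∃ a ∈ A, r c a :=
    fun c hc => hc.1 A x hA hx hc.2
  refine ⟨⟨hA.1.mono hAK, fun c₁ hc₁ c₂ hc₂ => ?_⟩, fun c hc => hc.2, fun u hu => ?_⟩
  · obtain ⟨a₁, ha₁, h₁⟩ := hcof c₁ hc₁
    obtain ⟨a₂, ha₂, h₂⟩ := hcof c₂ hc₂
    obtain ⟨a, ha, h₁a, h₂a⟩ := hA.2 a₁ ha₁ a₂ ha₂
    exact ⟨a, hAK a ha, htrans _ _ _ h₁ h₁a, htrans _ _ _ h₂ h₂a⟩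
  · exact hx.2 u fun a ha => hu a (hAK a ha)

end Order

theorem WithTop.exists_isGreatest_or_forall_exists_lt {α : Type*} [LinearOrder α]
    [LocallyFiniteOrderBot α] {S : Set (WithTop α)} (hS : S.Nonempty) :
    (∃ g, IsGreatest S g) ∨ ∀ p : α, ∃ n ∈ S, (p : WithTop α) < n := by
  refine or_iff_not_imp_right.mpr fun h => ?_
  push Not at h
  obtain ⟨p, hp⟩ := h
  have hfin : S.Finite := ((Set.finite_Iic p).image (↑)).subset fun n hn => by
    obtain ⟨q, rfl⟩ :=
      WithTop.ne_top_iff_exists.mp (ne_top_of_le_ne_top WithTop.coe_ne_top (hp n hn))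
    exact ⟨q, WithTop.coe_le_coe.mp (hp _ hn), rfl⟩
  obtain ⟨g, hg, hmax⟩ := Set.exists_max_image S id hfin hS
  exact ⟨g, hg, hmax⟩

namespace Sig

def get? : Sig → ℕ → Option ℕ+
  | .inl l, n => l.val[n]?
  | .inr f, n => some (f n)

def length : Sig → ℕ∞
  | .inl l => l.val.length
  | .inr _ => ⊤

/-- The entries of `a` at the indices `0, …, n`, read as `1` past the end of `a`. -/
def upTo (a : Sig) (n : ℕ) : Sig :=
  .inl ⟨List.ofFn fun i : Fin (n + 1) => (a.get? i).getD 1, by simp⟩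

theorem exists_get?_eq_some_iff {a : Sig} {n : ℕ} :
    (∃ x, a.get? n = some x) ↔ (n : ℕ∞) < a.length := by
  rcases a with l | f <;> simp [get?, length, ← Option.isSome_iff_exists]

theorem length_pos (a : Sig) : 0 < a.length := by
  rcases a with ⟨l, hl⟩ | f
  · simpa [length, List.length_pos_iff] using hl
  · simp [length]

theorem length_upTo (a : Sig) (n : ℕ) : (a.upTo n).length = n + 1 := by
  simp [upTo, length]

theorem get?_upTo_of_le {a : Sig} {n i : ℕ} (hi : i ≤ n) :
    (a.upTo n).get? i = some ((a.get? i).getD 1) := by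
  simp only [upTo, get?, List.getElem?_ofFn, Nat.lt_succ_of_le hi, dite_true]

theorem get?_upTo_of_lt {a : Sig} {n i : ℕ} (hi : n < i) : (a.upTo n).get? i = none := by
  simp only [upTo, get?, List.getElem?_ofFn]
  exact dif_neg (by omega)

end Sig

theorem sigLE_iff_get? {a b : Sig} :
    sigLE a b ↔ ∀ n x, a.get? n = some x → b.get? n = some x := by
  rcases a with ⟨l, hl⟩ | f <;> rcases b with ⟨l', hl'⟩ | g
  · simp only [sigLE, Sig.get?, List.prefix_iff_getElem?]
    constructor
    · intro h n x hx
      obtain ⟨hn, rfl⟩ := List.getElem?_eq_some_iff.mp hx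
      exact h n hn
    · exact fun h n hn => h n _ (List.getElem?_eq_getElem hn)
  · simp only [sigLE, Sig.get?, Option.some.injEq]
    constructor
    · intro h n x hx
      obtain ⟨hn, rfl⟩ := List.getElem?_eq_some_iff.mp hx
      exact (h ⟨n, hn⟩).symm
    · exact fun h i => (h i _ (List.getElem?_eq_getElem i.isLt)).symm
  · simp only [sigLE, Sig.get?, false_iff, not_forall]
    exact ⟨l'.length, _, rfl, by simp⟩
  · simp [sigLE, Sig.get?, funext_iff, eq_comm]

theorem sigLE_refl (a : Sig) : sigLE a a :=
  sigLE_iff_get?.2 fun _ _ => id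

theorem sigLE_trans {a b c : Sig} (hab : sigLE a b) (hbc : sigLE b c) : sigLE a c :=
  sigLE_iff_get?.2 fun n x h => sigLE_iff_get?.1 hbc n x (sigLE_iff_get?.1 hab n x h)

namespace Sig

theorem length_le_of_sigLE {a b : Sig} (h : sigLE a b) : a.length ≤ b.length := by
  rcases a with l | f <;> rcases b with l' | g
  · exact Nat.cast_le.mpr (List.IsPrefix.length_le h)
  · exact le_top
  · exact h.elim
  · exact le_rfl

theorem sigLE_of_length_le {a b t : Sig} (hat : sigLE a t) (hbt : sigLE b t)
    (hlen : a.length ≤ b.length) : sigLE a b := by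
  rw [sigLE_iff_get?] at *
  intro n x hx
  obtain ⟨y, hy⟩ := exists_get?_eq_some_iff.mpr ((exists_get?_eq_some_iff.mp ⟨x, hx⟩).trans_le hlen)
  rw [hy, ← hat n x hx, ← hbt n y hy]

theorem upTo_sigLE {a : Sig} {n : ℕ} (hn : (n : ℕ∞) < a.length) : sigLE (a.upTo n) a := by
  rw [sigLE_iff_get?]
  intro i x hx
  rcases le_or_gt i n with hi | hi
  · obtain ⟨y, hy⟩ := exists_get?_eq_some_iff.mpr ((Nat.cast_le.mpr hi).trans_lt hn)
    rw [get?_upTo_of_le hi, hy] at hx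
    rwa [hy]
  · rw [get?_upTo_of_lt hi] at hx
    cases hx

theorem sigLE_upTo_of_sigLE {c t : Sig} {n : ℕ} (hct : sigLE c t) (hlen : c.length ≤ n + 1) :
    sigLE c (t.upTo n) := by
  rw [sigLE_iff_get?] at hct ⊢
  intro i x hx
  have hi : (i : ℕ∞) < n + 1 := (exists_get?_eq_some_iff.mp ⟨x, hx⟩).trans_le hlen
  rw [get?_upTo_of_le (by exact_mod_cast (ENat.lt_add_one_iff (ENat.natCast_ne_top n)).mp hi),
    hct i x hx]
  rfl

theorem upTo_mono (a : Sig) {i j : ℕ} (h : i ≤ j) : sigLE (a.upTo i) (a.upTo j) := by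
  rw [sigLE_iff_get?]
  intro n x hx
  rcases le_or_gt n i with hn | hn
  · rwa [get?_upTo_of_le (hn.trans h), ← get?_upTo_of_le hn]
  · rw [get?_upTo_of_lt hn] at hx
    cases hx

theorem isSupOf_range_upTo (f : ℕ → ℕ+) :
    IsSupOf sigLE (Set.range (Sig.upTo (.inr f))) (.inr f) := by
  refine ⟨?_, fun u hu => sigLE_iff_get?.2 fun n x hx => ?_⟩
  · rintro _ ⟨n, rfl⟩
    exact upTo_sigLE (by simp [length])
  · cases hx
    exact sigLE_iff_get?.1 (hu _ ⟨n, rfl⟩) n (f n) (get?_upTo_of_le le_rfl)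

theorem not_sigLE_upTo (f : ℕ → ℕ+) (n : ℕ) : ¬ sigLE (.inr f) (Sig.upTo (.inr f) n) := fun h => by
  have := length_le_of_sigLE h
  rw [length_upTo] at this
  simp [length] at this

theorem exists_isSupOf {C : Set Sig} (hC : DirectedSet sigLE C) : ∃ t, IsSupOf sigLE C t := by
  obtain ⟨⟨c₀, hc₀⟩, hdir⟩ := hC
  by_cases hmax : ∃ c ∈ C, ∀ d ∈ C, d.length ≤ c.length
  · obtain ⟨c, hc, hlen⟩ := hmax
    refine ⟨c, isSupOf_of_greatest hc fun d hd => ?_⟩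
    obtain ⟨e, -, hde, hce⟩ := hdir d hd c hc
    exact sigLE_of_length_le hde hce (hlen d hd)
  push Not at hmax
  have hunb : ∀ n : ℕ, ∃ c ∈ C, (n : ℕ∞) < c.length := by
    intro n
    induction n with
    | zero => exact ⟨c₀, hc₀, by simpa using length_pos c₀⟩
    | succ n ih =>
      obtain ⟨c, hc, hn⟩ := ih
      obtain ⟨d, hd, hcd⟩ := hmax c hc
      exact ⟨d, hd, by simpa using (Order.add_one_le_of_lt hn).trans_lt hcd⟩
  choose c hc hlt using hunb
  choose f hf using fun n => exists_get?_eq_some_iff.mpr (hlt n)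
  refine ⟨.inr f, fun d hd => sigLE_iff_get?.2 fun n x hx => ?_,
    fun u hu => sigLE_iff_get?.2 fun n x hx => ?_⟩
  · obtain ⟨e, -, hde, hce⟩ := hdir d hd (c n) (hc n)
    exact ((sigLE_iff_get?.1 hde n x hx).symm.trans (sigLE_iff_get?.1 hce n _ (hf n))).symm
  · cases hx
    exact sigLE_iff_get?.1 (hu _ (hc n)) n _ (hf n)

theorem exists_lt_length_of_isSupOf {C : Set Sig} (hC : C.Nonempty) {t : Sig}
    (ht : IsSupOf sigLE C t) {n : ℕ} (hn : (n : ℕ∞) < t.length) :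
    ∃ c ∈ C, (n : ℕ∞) < c.length := by
  by_contra! hshort
  obtain ⟨c₀, hc₀⟩ := hC
  obtain ⟨m, rfl⟩ : ∃ m, n = m + 1 :=
    Nat.exists_eq_succ_of_ne_zero fun h => by
      simpa [h] using (length_pos c₀).trans_le (hshort c₀ hc₀)
  -- Otherwise the truncation of `t` to length `m + 1` is an upper bound of `C`.
  have htu : sigLE t (t.upTo m) :=
    ht.2 _ fun c hc => sigLE_upTo_of_sigLE (ht.1 c hc) (by exact_mod_cast hshort c hc)
  exact ((length_le_of_sigLE htu).trans_lt (by rwa [length_upTo])).false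

theorem exists_sigLE_of_isSupOf {C : Set Sig} (hC : C.Nonempty) {t : Sig}
    (ht : IsSupOf sigLE C t) {l : FinSeq} (hl : sigLE (.inl l) t) : ∃ c ∈ C, sigLE (.inl l) c := by
  obtain ⟨m, hm⟩ : ∃ m, l.val.length = m + 1 :=
    Nat.exists_eq_succ_of_ne_zero (by simpa [List.length_eq_zero_iff] using l.2)
  have hlen : Sig.length (.inl l) = m + 1 := by simp [length, hm]
  have hmt : (m : ℕ∞) < t.length :=
    (by norm_cast; omega : (m : ℕ∞) < m + 1).trans_le (hlen ▸ length_le_of_sigLE hl)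
  obtain ⟨c, hc, hmc⟩ := exists_lt_length_of_isSupOf hC ht hmt
  exact ⟨c, hc, sigLE_of_length_le hl (ht.1 c hc) (hlen ▸ Order.add_one_le_of_lt hmc)⟩

end Sig

theorem entryGE_iff_get? {a : Sig} {k : ℕ} {m : ℕ+} :
    entryGE a k m ↔ ∃ e, a.get? k = some e ∧ m ≤ e := by
  rcases a with l | f
  · simp [entryGE, Sig.get?, List.getElem?_eq_some_iff]
  · simp [entryGE, Sig.get?]

theorem lLE_toX_inr_iff {x : XP} {w : Sig ⊕ Sig} :
    lLE (toX x) (.inr w) ↔ ∃ e, (sigOf w).get? x.1.natPred = some e ∧ x.2 ≤ e := by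
  simp only [toX, lLE, entryGE_iff_get?]
  constructor
  · rintro ⟨m, hm, e, he, hme⟩
    exact ⟨e, he, hm ▸ WithTop.coe_le_coe.mpr hme⟩
  · rintro ⟨e, he, hxe⟩
    obtain ⟨m, hm⟩ := WithTop.ne_top_iff_exists.mp (ne_top_of_le_ne_top WithTop.coe_ne_top hxe)
    exact ⟨m, hm.symm, e, he, WithTop.coe_le_coe.mp (hm ▸ hxe)⟩

theorem not_lLE_inr_inl {w : Sig ⊕ Sig} {x : XP} : ¬ lLE (.inr w) (.inl x) := by
  rcases w with a | a <;> exact id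

theorem not_lLE_toS'_toS {a b : Sig} : ¬ lLE (toS' a) (toS b) := id

theorem sigLE_sigOf_of_lLE {v w : Sig ⊕ Sig} (h : lLE (.inr v) (.inr w)) :
    sigLE (sigOf v) (sigOf w) := by
  rcases v with a | a <;> rcases w with b | b
  exacts [h, h, h.elim, h]

theorem lLE_inr_toS'_iff {v : Sig ⊕ Sig} {t : Sig} : lLE (.inr v) (toS' t) ↔ sigLE (sigOf v) t := by
  rcases v with a | a <;> exact Iff.rfl

theorem lLE_toS_of_lLE_toS' {d : LP} {t : Sig} (h : lLE d (toS' t)) (hd : ∀ b, d ≠ toS' b) :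
    lLE d (toS t) := by
  rcases d with x | a | a
  exacts [h, h, (hd a rfl).elim]

theorem exists_eq_inr_of_lLE {v : Sig ⊕ Sig} {u : LP} (h : lLE (.inr v) u) : ∃ w, u = .inr w := by
  rcases u with x | w
  exacts [(not_lLE_inr_inl h).elim, ⟨w, rfl⟩]

theorem exists_eq_toS'_of_lLE {b : Sig} {u : LP} (h : lLE (toS' b) u) : ∃ c, u = toS' c := by
  rcases u with x | c | c
  exacts [h.elim, h.elim, ⟨c, rfl⟩]

theorem lLE_refl (x : LP) : lLE x x := by
  rcases x with x | a | a
  exacts [⟨rfl, le_rfl⟩, sigLE_refl a, sigLE_refl a]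

theorem lLE_trans {x y z : LP} (hxy : lLE x y) (hyz : lLE y z) : lLE x z := by
  rcases y with y | v
  · rcases x with x | v
    · rcases z with z | w
      · exact ⟨hxy.1.trans hyz.1, hxy.2.trans hyz.2⟩
      · obtain ⟨e, he, hye⟩ := lLE_toX_inr_iff.mp hyz
        exact lLE_toX_inr_iff.mpr ⟨e, hxy.1 ▸ he, hxy.2.trans hye⟩
    · exact (not_lLE_inr_inl hxy).elim
  rcases z with z | w
  · exact (not_lLE_inr_inl hyz).elim
  rcases x with x | a | a
  · obtain ⟨e, he, hxe⟩ := lLE_toX_inr_iff.mp hxy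
    exact lLE_toX_inr_iff.mpr ⟨e, sigLE_iff_get?.1 (sigLE_sigOf_of_lLE hyz) _ _ he, hxe⟩
  · exact sigLE_trans hxy (sigLE_sigOf_of_lLE hyz)
  rcases v with b | b
  · exact (not_lLE_toS'_toS hxy).elim
  rcases w with c | c
  · exact (not_lLE_toS'_toS hyz).elim
  exact sigLE_trans hxy hyz

section SeqPart

variable {D : Set LP}

def seqPart (D : Set LP) : Set Sig := {a | ∃ w, Sum.inr w ∈ D ∧ sigOf w = a}

theorem exists_inr_mem_lLE (hD : DirectedSet lLE D) {w₀ : Sig ⊕ Sig} (hw₀ : .inr w₀ ∈ D)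
    {d : LP} (hd : d ∈ D) : ∃ v, .inr v ∈ D ∧ lLE d (.inr v) := by
  obtain ⟨e, he, hde, hw₀e⟩ := hD.2 d hd _ hw₀
  obtain ⟨v, rfl⟩ := exists_eq_inr_of_lLE hw₀e
  exact ⟨v, he, hde⟩

theorem directedSet_seqPart (hD : DirectedSet lLE D) {w₀ : Sig ⊕ Sig} (hw₀ : .inr w₀ ∈ D) :
    DirectedSet sigLE (seqPart D) := by
  refine ⟨⟨_, w₀, hw₀, rfl⟩, ?_⟩
  rintro _ ⟨v₁, hv₁, rfl⟩ _ ⟨v₂, hv₂, rfl⟩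
  obtain ⟨e, he, h₁, h₂⟩ := hD.2 _ hv₁ _ hv₂
  obtain ⟨v, rfl⟩ := exists_eq_inr_of_lLE h₁
  exact ⟨_, ⟨v, he, rfl⟩, sigLE_sigOf_of_lLE h₁, sigLE_sigOf_of_lLE h₂⟩

theorem sigLE_of_mem_seqPart {w : Sig ⊕ Sig} (hw : ∀ d ∈ D, lLE d (.inr w)) :
    ∀ a ∈ seqPart D, sigLE a (sigOf w) := by
  rintro _ ⟨v, hv, rfl⟩
  exact sigLE_sigOf_of_lLE (hw _ hv)

theorem lLE_toS'_of_seqPart (hD : DirectedSet lLE D) {w₀ : Sig ⊕ Sig} (hw₀ : .inr w₀ ∈ D)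
    {t : Sig} (ht : ∀ a ∈ seqPart D, sigLE a t) : ∀ d ∈ D, lLE d (toS' t) := by
  intro d hd
  obtain ⟨v, hv, hdv⟩ := exists_inr_mem_lLE hD hw₀ hd
  exact lLE_trans hdv (lLE_inr_toS'_iff.mpr (ht _ ⟨v, hv, rfl⟩))

theorem isSupOf_seqPart (hD : DirectedSet lLE D) {w₀ : Sig ⊕ Sig} (hw₀ : .inr w₀ ∈ D)
    {w : Sig ⊕ Sig} (hw : IsSupOf lLE D (.inr w)) : IsSupOf sigLE (seqPart D) (sigOf w) :=
  ⟨sigLE_of_mem_seqPart hw.1,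
    fun _ ht => sigLE_sigOf_of_lLE (hw.2 _ (lLE_toS'_of_seqPart hD hw₀ ht))⟩

theorem isSupOf_toS' (hD : DirectedSet lLE D) {b : Sig} (hb : toS' b ∈ D) {t : Sig}
    (ht : IsSupOf sigLE (seqPart D) t) : IsSupOf lLE D (toS' t) := by
  refine ⟨lLE_toS'_of_seqPart hD hb ht.1, fun u hu => ?_⟩
  obtain ⟨c, rfl⟩ := exists_eq_toS'_of_lLE (hu _ hb)
  exact ht.2 c (sigLE_of_mem_seqPart hu)

theorem isSupOf_toS (hD : DirectedSet lLE D) {w₀ : Sig ⊕ Sig} (hw₀ : .inr w₀ ∈ D)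
    (hS' : ∀ b, toS' b ∉ D) {t : Sig} (ht : IsSupOf sigLE (seqPart D) t) :
    IsSupOf lLE D (toS t) := by
  refine ⟨fun d hd => ?_, fun u hu => ?_⟩
  · exact lLE_toS_of_lLE_toS' (lLE_toS'_of_seqPart hD hw₀ ht.1 d hd) fun b h => hS' b (h ▸ hd)
  · obtain ⟨w, rfl⟩ := exists_eq_inr_of_lLE (hu _ hw₀)
    exact ht.2 _ (sigLE_of_mem_seqPart hu)

end SeqPart

section XPart

variable {D : Set LP}

theorem exists_fst_eq_of_directedSet (hD : DirectedSet lLE D) (hX : ∀ w, Sum.inr w ∉ D) :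
    ∃ k, ∀ d ∈ D, ∃ n, d = toX (k, n) := by
  obtain ⟨⟨d₀, hd₀⟩, hdir⟩ := hD
  have hinl : ∀ d ∈ D, ∃ x, d = toX x := fun d hd => by
    rcases d with x | w
    exacts [⟨x, rfl⟩, (hX w hd).elim]
  obtain ⟨⟨k, n₀⟩, rfl⟩ := hinl d₀ hd₀
  refine ⟨k, fun d hd => ?_⟩
  obtain ⟨⟨k', n⟩, rfl⟩ := hinl d hd
  obtain ⟨e, he, hde, h₀e⟩ := hdir _ hd _ hd₀
  obtain ⟨⟨k'', n''⟩, rfl⟩ := hinl e he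
  exact ⟨n, by rw [show k' = k'' from hde.1, show k = k'' from h₀e.1]⟩

theorem isSupOf_toX_top {k : ℕ+} (hk : ∀ d ∈ D, ∃ n, d = toX (k, n))
    (hunb : ∀ p : ℕ+, ∃ n, toX (k, n) ∈ D ∧ (p : WithTop ℕ+) < n) :
    IsSupOf lLE D (toX (k, ⊤)) := by
  refine ⟨fun d hd => ?_, fun u hu => ?_⟩
  · obtain ⟨n, rfl⟩ := hk d hd
    exact ⟨rfl, le_top⟩
  obtain ⟨n₁, hn₁, -⟩ := hunb 1
  rcases u with ⟨k', _ | p⟩ | w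
  · exact ⟨(hu _ hn₁).1, le_rfl⟩
  · obtain ⟨n, hn, hpn⟩ := hunb p
    exact absurd (hu _ hn).2 hpn.not_ge
  · obtain ⟨e, he, -⟩ := lLE_toX_inr_iff.mp (hu _ hn₁)
    obtain ⟨n, hn, hen⟩ := hunb e
    obtain ⟨e', he', hne'⟩ := lLE_toX_inr_iff.mp (hu _ hn)
    cases he.symm.trans he'
    exact absurd hne' hen.not_ge

theorem exists_greatest_or_forall_exists_lt {k : ℕ+} (hne : D.Nonempty)
    (hk : ∀ d ∈ D, ∃ n, d = toX (k, n)) :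
    (∃ g, toX (k, g) ∈ D ∧ ∀ d ∈ D, lLE d (toX (k, g))) ∨
      ∀ p : ℕ+, ∃ n, toX (k, n) ∈ D ∧ (p : WithTop ℕ+) < n := by
  obtain ⟨d₀, hd₀⟩ := hne
  obtain ⟨n₀, rfl⟩ := hk d₀ hd₀
  refine (WithTop.exists_isGreatest_or_forall_exists_lt (S := {n | toX (k, n) ∈ D})
    ⟨n₀, hd₀⟩).imp (fun ⟨g, hg, hmax⟩ => ⟨g, hg, fun d hd => ?_⟩) id
  obtain ⟨n, rfl⟩ := hk d hd
  exact ⟨rfl, hmax hd⟩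

theorem exists_isSupOf_toX (hD : DirectedSet lLE D) (hX : ∀ w, Sum.inr w ∉ D) :
    ∃ x, IsSupOf lLE D (toX x) := by
  obtain ⟨k, hk⟩ := exists_fst_eq_of_directedSet hD hX
  rcases exists_greatest_or_forall_exists_lt hD.1 hk with ⟨g, hg, hmax⟩ | hunb
  · exact ⟨(k, g), isSupOf_of_greatest hg hmax⟩
  · exact ⟨(k, ⊤), isSupOf_toX_top hk hunb⟩

end XPart

theorem exists_isSupOf_of_directedSet {D : Set LP} (hD : DirectedSet lLE D) :
    ∃ s, IsSupOf lLE D s := by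
  by_cases hX : ∀ w, Sum.inr w ∉ D
  · obtain ⟨x, hx⟩ := exists_isSupOf_toX hD hX
    exact ⟨_, hx⟩
  push Not at hX
  obtain ⟨w₀, hw₀⟩ := hX
  obtain ⟨t, ht⟩ := Sig.exists_isSupOf (directedSet_seqPart hD hw₀)
  by_cases hS' : ∃ b, toS' b ∈ D
  · obtain ⟨b, hb⟩ := hS'
    exact ⟨_, isSupOf_toS' hD hb ht⟩
  · push Not at hS'
    exact ⟨_, isSupOf_toS hD hw₀ hS' ht⟩

theorem isCompactEl_toS_inl (l : FinSeq) : IsCompactEl lLE (toS (.inl l)) := by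
  intro D s hD hs hle
  obtain ⟨w, rfl⟩ := exists_eq_inr_of_lLE hle
  obtain ⟨w₀, hw₀⟩ : ∃ w₀, Sum.inr w₀ ∈ D := by
    by_contra! hX
    obtain ⟨x, hx⟩ := exists_isSupOf_toX hD hX
    exact not_lLE_inr_inl (hs.2 _ hx.1)
  obtain ⟨_, ⟨v, hv, rfl⟩, hlv⟩ :=
    Sig.exists_sigLE_of_isSupOf (directedSet_seqPart hD hw₀).1 (isSupOf_seqPart hD hw₀ hs) hle
  exact ⟨_, hv, hlv⟩

theorem isCompactEl_toS'_inl (l : FinSeq) : IsCompactEl lLE (toS' (.inl l)) := by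
  intro D s hD hs hle
  obtain ⟨b, rfl⟩ := exists_eq_toS'_of_lLE hle
  obtain ⟨b₀, hb₀⟩ : ∃ b₀, toS' b₀ ∈ D := by
    by_contra! hS'
    refine not_lLE_toS'_toS (hs.2 (toS b) fun d hd => ?_)
    exact lLE_toS_of_lLE_toS' (hs.1 d hd) fun c h => hS' c (h ▸ hd)
  obtain ⟨_, ⟨v, hv, rfl⟩, hlv⟩ :=
    Sig.exists_sigLE_of_isSupOf (directedSet_seqPart hD hb₀).1 (isSupOf_seqPart hD hb₀ hs) hle
  obtain ⟨e, he, hve, hb₀e⟩ := hD.2 _ hv _ hb₀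
  obtain ⟨c, rfl⟩ := exists_eq_toS'_of_lLE hb₀e
  exact ⟨_, he, sigLE_trans hlv (sigLE_sigOf_of_lLE hve)⟩

theorem isCompactEl_toX_coe (k m : ℕ+) : IsCompactEl lLE (toX (k, m)) := by
  intro D s hD hs hle
  rcases s with ⟨k', y⟩ | w
  · obtain ⟨rfl, hmy⟩ : k = k' ∧ (m : WithTop ℕ+) ≤ y := hle
    have hk : ∀ d ∈ D, ∃ n, d = toX (k, n) := fun d hd => by
      rcases d with ⟨k'', n⟩ | v
      · exact ⟨n, by rw [show k'' = k from (hs.1 _ hd).1]; rfl⟩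
      · exact (not_lLE_inr_inl (hs.1 _ hd)).elim
    rcases exists_greatest_or_forall_exists_lt hD.1 hk with ⟨g, hg, hmax⟩ | hunb
    · have hyg : lLE (toX (k, y)) (toX (k, g)) := hs.2 _ hmax
      exact ⟨_, hg, rfl, hmy.trans hyg.2⟩
    · obtain ⟨n, hn, hmn⟩ := hunb m
      exact ⟨_, hn, rfl, hmn.le⟩
  · -- `x_{k,m}` lies below the prefix of length `k` of the supremum, which is compact
    obtain ⟨e, he, hme⟩ := lLE_toX_inr_iff.mp hle
    have hxu : lLE (toX (k, m)) (toS ((sigOf w).upTo k.natPred)) :=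
      lLE_toX_inr_iff.mpr ⟨e, by
        show ((sigOf w).upTo k.natPred).get? k.natPred = some e
        rw [Sig.get?_upTo_of_le le_rfl, he]
        rfl, hme⟩
    have hus : lLE (toS ((sigOf w).upTo k.natPred)) (.inr w) :=
      Sig.upTo_sigLE (Sig.exists_get?_eq_some_iff.mp ⟨e, he⟩)
    obtain ⟨d, hd, hud⟩ := isCompactEl_toS_inl _ D _ hD hs hus
    exact ⟨d, hd, lLE_trans hxu hud⟩

theorem directedSet_range_toX (k : ℕ+) :
    DirectedSet lLE (Set.range fun j : ℕ+ => toX (k, j)) :=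
  directedSet_range fun _ _ hij => ⟨rfl, WithTop.coe_le_coe.mpr hij⟩

theorem isSupOf_range_toX (k : ℕ+) :
    IsSupOf lLE (Set.range fun j : ℕ+ => toX (k, j)) (toX (k, ⊤)) :=
  isSupOf_toX_top (by rintro _ ⟨j, rfl⟩; exact ⟨j, rfl⟩)
    fun p => ⟨p + 1, ⟨p + 1, rfl⟩, WithTop.coe_lt_coe.mpr (PNat.lt_add_right p 1)⟩

theorem not_isCompactEl_toX_top (k : ℕ+) : ¬ IsCompactEl lLE (toX (k, ⊤)) :=
  not_isCompactEl_of_isSupOf (directedSet_range_toX k) (isSupOf_range_toX k) (lLE_refl _) <| by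
    rintro _ ⟨j, rfl⟩ h
    exact (WithTop.coe_lt_top j).not_ge h.2

theorem directedSet_range_toS_upTo (f : ℕ → ℕ+) :
    DirectedSet lLE (Set.range fun n => toS (Sig.upTo (.inr f) n)) :=
  directedSet_range fun _ _ => Sig.upTo_mono _

theorem directedSet_range_toS'_upTo (f : ℕ → ℕ+) :
    DirectedSet lLE (Set.range fun n => toS' (Sig.upTo (.inr f) n)) :=
  directedSet_range fun _ _ => Sig.upTo_mono _

theorem isSupOf_range_toS_upTo (f : ℕ → ℕ+) :
    IsSupOf lLE (Set.range fun n => toS (Sig.upTo (.inr f) n)) (toS (.inr f)) := by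
  refine isSupOf_toS (directedSet_range_toS_upTo f) ⟨0, rfl⟩ ?_ ?_
  · rintro b ⟨n, h⟩
    cases h
  · convert Sig.isSupOf_range_upTo f
    ext a
    simp [seqPart, toS, sigOf]

theorem isSupOf_range_toS'_upTo (f : ℕ → ℕ+) :
    IsSupOf lLE (Set.range fun n => toS' (Sig.upTo (.inr f) n)) (toS' (.inr f)) := by
  refine isSupOf_toS' (directedSet_range_toS'_upTo f) ⟨0, rfl⟩ ?_
  convert Sig.isSupOf_range_upTo f
  ext a
  simp [seqPart, toS', sigOf]

theorem not_isCompactEl_toS_inr (f : ℕ → ℕ+) : ¬ IsCompactEl lLE (toS (.inr f)) :=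
  not_isCompactEl_of_isSupOf (directedSet_range_toS_upTo f) (isSupOf_range_toS_upTo f)
    (lLE_refl _) <| by
      rintro _ ⟨n, rfl⟩
      exact Sig.not_sigLE_upTo f n

theorem not_isCompactEl_toS'_inr (f : ℕ → ℕ+) : ¬ IsCompactEl lLE (toS' (.inr f)) :=
  not_isCompactEl_of_isSupOf (directedSet_range_toS'_upTo f) (isSupOf_range_toS'_upTo f)
    (lLE_refl _) <| by
      rintro _ ⟨n, rfl⟩
      exact Sig.not_sigLE_upTo f n

theorem exists_directedSet_isSupOf_of_compact (x : LP) :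
    ∃ A, DirectedSet lLE A ∧ IsSupOf lLE A x ∧ ∀ a ∈ A, IsCompactEl lLE a := by
  have of_compact (hx : IsCompactEl lLE x) : ∃ A, DirectedSet lLE A ∧ IsSupOf lLE A x ∧
      ∀ a ∈ A, IsCompactEl lLE a :=
    ⟨{x}, directedSet_singleton (lLE_refl x), isSupOf_of_greatest rfl (by simp [lLE_refl]),
      by simpa using hx⟩
  rcases x with ⟨k, _ | m⟩ | (l | f) | (l | f)
  · exact ⟨_, directedSet_range_toX k, isSupOf_range_toX k,
      by rintro _ ⟨j, rfl⟩; exact isCompactEl_toX_coe k j⟩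
  · exact of_compact (isCompactEl_toX_coe k m)
  · exact of_compact (isCompactEl_toS_inl l)
  · exact ⟨_, directedSet_range_toS_upTo f, isSupOf_range_toS_upTo f,
      by rintro _ ⟨n, rfl⟩; exact isCompactEl_toS_inl _⟩
  · exact of_compact (isCompactEl_toS'_inl l)
  · exact ⟨_, directedSet_range_toS'_upTo f, isSupOf_range_toS'_upTo f,
      by rintro _ ⟨n, rfl⟩; exact isCompactEl_toS'_inl _⟩

theorem countable_setOf_isCompactEl : {c : LP | IsCompactEl lLE c}.Countable := by
  refine (Set.countable_range (Sum.map (fun p : ℕ+ × ℕ+ => (p.1, (p.2 : WithTop ℕ+)))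
    (Sum.map (Sum.inl : FinSeq → Sig) (Sum.inl : FinSeq → Sig)))).mono ?_
  rintro (⟨k, _ | m⟩ | (l | f) | (l | f)) hc
  · exact (not_isCompactEl_toX_top k hc).elim
  · exact ⟨.inl (k, m), rfl⟩
  · exact ⟨.inr (.inl l), rfl⟩
  · exact (not_isCompactEl_toS_inr f hc).elim
  · exact ⟨.inr (.inr l), rfl⟩
  · exact (not_isCompactEl_toS'_inr f hc).elim

theorem stmt17 :
    (∀ D : Set LP, DirectedSet lLE D → ∃ s, IsSupOf lLE D s) ∧
    (∀ x : LP,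
      DirectedSet lLE {c | IsCompactEl lLE c ∧ lLE c x} ∧
      IsSupOf lLE {c | IsCompactEl lLE c ∧ lLE c x} x) ∧
    {u : LP | IsCompactEl lLE u}.Countable := by
  refine ⟨fun _ => exists_isSupOf_of_directedSet, fun x => ?_, countable_setOf_isCompactEl⟩
  obtain ⟨A, hA, hx, hAc⟩ := exists_directedSet_isSupOf_of_compact x
  exact directedSet_and_isSupOf_compactsBelow (r := lLE) (fun _ _ _ => lLE_trans) hA hx hAc
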